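/- arXiv:1903.06972 — 8 statements merged into one kernel-verified Lean document; each statement's English description precedes it below -/
import Mathlib

section
/- Let V : [0,∞) → ℝ be a nonnegative differentiable function satisfying V'(t) ≤ -(a·V(t)^p + b·V(t)^q)^k for all t with V(t) > 0, where a, b, p, q, k > 0, pk < 1, and qk > 1. Then V(t) = 0 for all t ≥ T, where T = 1/(a^k(1-pk)) + 1/(b^k(qk-1)). -/
/-- Fixed-time stability comparison lemma (Polyakov): if a nonnegative differentiable
`V` satisfies `V' ≤ -(a V^p + b V^q)^k` whenever `V > 0`, with `a,b,p,q,k > 0`,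
`p k < 1`, `q k > 1`, then `V t = 0` for all `t ≥ 1/(a^k (1-pk)) + 1/(b^k (qk-1))`. -/
theorem fixed_time_stability
    (V : ℝ → ℝ) (hV : Differentiable ℝ V)
    (hnn : ∀ t, 0 ≤ t → 0 ≤ V t)
    (a b p q k : ℝ) (ha : 0 < a) (hb : 0 < b) (hp : 0 < p) (hq : 0 < q) (hk : 0 < k)
    (hpk : p * k < 1) (hqk : 1 < q * k)
    (hineq : ∀ t, 0 ≤ t → 0 < V t →
      deriv V t ≤ -(a * V t ^ p + b * V t ^ q) ^ k) :
    ∀ t, 1 / (a ^ k * (1 - p * k)) + 1 / (b ^ k * (q * k - 1)) ≤ t → V t = 0 := by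
  have hak : 0 < a ^ k := Real.rpow_pos_of_pos ha k
  have hbk : 0 < b ^ k := Real.rpow_pos_of_pos hb k
  set T₂ := 1 / (a ^ k * (1 - p * k)) with hT₂def
  set T₁ := 1 / (b ^ k * (q * k - 1)) with hT₁def
  have hT₁pos : 0 < T₁ := one_div_pos.mpr (mul_pos hbk (by linarith))
  have hT₂pos : 0 < T₂ := one_div_pos.mpr (mul_pos hak (by linarith))
  -- V is antitone on [0,∞)
  have hant : AntitoneOn V (Set.Ici (0:ℝ)) := by
    apply antitoneOn_of_deriv_nonpos (convex_Ici 0) hV.continuous.continuousOn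
      hV.differentiableOn
    intro x hx
    rw [interior_Ici] at hx
    rcases eq_or_lt_of_le (hnn x hx.le) with h0 | h0
    · have hmin : IsLocalMin V x := by
        filter_upwards [Ioi_mem_nhds hx] with y hy
        rw [← h0]; exact hnn y hy.le
      rw [hmin.deriv_eq_zero]
    · have h := hineq x hx.le h0
      have hnonneg : (0:ℝ) ≤ (a * V x ^ p + b * V x ^ q) ^ k :=
        Real.rpow_nonneg (by positivity) k
      linarith
  -- the two derivative bounds at points where V > 0
  have hVd' : ∀ x, 0 ≤ x → 0 < V x →
      deriv V x ≤ -(b ^ k * V x ^ (q * k)) ∧ deriv V x ≤ -(a ^ k * V x ^ (p * k)) := by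
    intro x hx hVx
    have h := hineq x hx hVx
    have hap : 0 ≤ a * V x ^ p := by positivity
    have hbq : 0 ≤ b * V x ^ q := by positivity
    constructor
    · have he : (b * V x ^ q) ^ k = b ^ k * V x ^ (q * k) := by
        rw [Real.mul_rpow hb.le (Real.rpow_nonneg hVx.le q), ← Real.rpow_mul hVx.le]
      have hle : (b * V x ^ q) ^ k ≤ (a * V x ^ p + b * V x ^ q) ^ k :=
        Real.rpow_le_rpow hbq (by linarith) hk.le
      rw [he] at hle; linarith
    · have he : (a * V x ^ p) ^ k = a ^ k * V x ^ (p * k) := by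
        rw [Real.mul_rpow ha.le (Real.rpow_nonneg hVx.le p), ← Real.rpow_mul hVx.le]
      have hle : (a * V x ^ p) ^ k ≤ (a * V x ^ p + b * V x ^ q) ^ k :=
        Real.rpow_le_rpow hap (by linarith) hk.le
      rw [he] at hle; linarith
  -- Step 1: V T₁ ≤ 1
  have h1 : V T₁ ≤ 1 := by
    by_contra hgt
    push_neg at hgt
    have hVpos : ∀ x ∈ Set.Icc (0:ℝ) T₁, 0 < V x := by
      intro x hx
      have := hant (Set.mem_Ici.mpr hx.1) (Set.mem_Ici.mpr hT₁pos.le) hx.2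
      linarith
    set c : ℝ := 1 - q * k with hc
    have hcneg : c < 0 := by rw [hc]; linarith
    have hg : ∀ x ∈ Set.Icc (0:ℝ) T₁, HasDerivAt (fun s => V s ^ c - b ^ k * (q * k - 1) * s)
        (deriv V x * c * V x ^ (c - 1) - b ^ k * (q * k - 1)) x := by
      intro x hx
      exact ((hV x).hasDerivAt.rpow_const (Or.inl (hVpos x hx).ne')).sub
        (by simpa using (hasDerivAt_id x).const_mul (b ^ k * (q * k - 1)))
    have hmono : MonotoneOn (fun s => V s ^ c - b ^ k * (q * k - 1) * s) (Set.Icc 0 T₁) := by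
      apply monotoneOn_of_deriv_nonneg (convex_Icc 0 T₁)
      · exact fun x hx => (hg x hx).continuousAt.continuousWithinAt
      · rw [interior_Icc]
        exact fun x hx =>
          ((hg x (Set.Ioo_subset_Icc_self hx)).differentiableAt).differentiableWithinAt
      · rw [interior_Icc]
        intro x hx
        rw [(hg x (Set.Ioo_subset_Icc_self hx)).deriv]
        have hVx := hVpos x (Set.Ioo_subset_Icc_self hx)
        have hd := (hVd' x hx.1.le hVx).1
        have hA : 0 < V x ^ (q * k) := Real.rpow_pos_of_pos hVx _
        have hA1 : V x ^ (c - 1) = (V x ^ (q * k))⁻¹ := by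
          rw [show c - 1 = -(q * k) by rw [hc]; ring, Real.rpow_neg hVx.le]
        have hcA : c * (V x ^ (q * k))⁻¹ ≤ 0 :=
          mul_nonpos_of_nonpos_of_nonneg hcneg.le (inv_nonneg.mpr hA.le)
        have h2 := mul_le_mul_of_nonpos_left hd hcA
        have key : c * (V x ^ (q * k))⁻¹ * -(b ^ k * V x ^ (q * k)) = b ^ k * (q * k - 1) := by
          rw [hc]; field_simp; ring
        rw [key] at h2
        rw [hA1]
        nlinarith [h2]
    have hle := hmono (Set.left_mem_Icc.mpr hT₁pos.le) (Set.right_mem_Icc.mpr hT₁pos.le) hT₁pos.le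
    simp only [mul_zero, sub_zero] at hle
    have hCcT : b ^ k * (q * k - 1) * T₁ = 1 := by
      rw [hT₁def, mul_one_div, div_self (mul_pos hbk (by linarith)).ne']
    have h01 : 0 < V 0 ^ c :=
      Real.rpow_pos_of_pos (hVpos 0 (Set.left_mem_Icc.mpr hT₁pos.le)) c
    have hlt1 : V T₁ ^ c < 1 := Real.rpow_lt_one_of_one_lt_of_neg hgt hcneg
    linarith
  -- Step 2: V (T₂ + T₁) = 0
  have hTpos : 0 < T₂ + T₁ := by linarith
  have h2 : V (T₂ + T₁) = 0 := by
    by_contra hne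
    have hVT : 0 < V (T₂ + T₁) := lt_of_le_of_ne (hnn _ hTpos.le) (Ne.symm hne)
    have hVpos : ∀ x ∈ Set.Icc T₁ (T₂ + T₁), 0 < V x := by
      intro x hx
      have := hant (Set.mem_Ici.mpr (hT₁pos.le.trans hx.1)) (Set.mem_Ici.mpr hTpos.le) hx.2
      linarith
    set d : ℝ := 1 - p * k with hdd
    have hdpos : 0 < d := by rw [hdd]; linarith
    have hg : ∀ x ∈ Set.Icc T₁ (T₂ + T₁), HasDerivAt (fun s => V s ^ d + a ^ k * (1 - p * k) * s)
        (deriv V x * d * V x ^ (d - 1) + a ^ k * (1 - p * k)) x := by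
      intro x hx
      exact ((hV x).hasDerivAt.rpow_const (Or.inl (hVpos x hx).ne')).add
        (by simpa using (hasDerivAt_id x).const_mul (a ^ k * (1 - p * k)))
    have hanti : AntitoneOn (fun s => V s ^ d + a ^ k * (1 - p * k) * s)
        (Set.Icc T₁ (T₂ + T₁)) := by
      apply antitoneOn_of_deriv_nonpos (convex_Icc _ _)
      · exact fun x hx => (hg x hx).continuousAt.continuousWithinAt
      · rw [interior_Icc]
        exact fun x hx =>
          ((hg x (Set.Ioo_subset_Icc_self hx)).differentiableAt).differentiableWithinAt
      · rw [interior_Icc]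
        intro x hx
        rw [(hg x (Set.Ioo_subset_Icc_self hx)).deriv]
        have hVx := hVpos x (Set.Ioo_subset_Icc_self hx)
        have hd := (hVd' x ((hT₁pos.trans hx.1).le) hVx).2
        have hA : 0 < V x ^ (p * k) := Real.rpow_pos_of_pos hVx _
        have hA1 : V x ^ (d - 1) = (V x ^ (p * k))⁻¹ := by
          rw [show d - 1 = -(p * k) by rw [hdd]; ring, Real.rpow_neg hVx.le]
        have hcA : 0 ≤ d * (V x ^ (p * k))⁻¹ :=
          mul_nonneg hdpos.le (inv_nonneg.mpr hA.le)
        have h2 := mul_le_mul_of_nonneg_left hd hcA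
        have key : d * (V x ^ (p * k))⁻¹ * -(a ^ k * V x ^ (p * k)) = -(a ^ k * (1 - p * k)) := by
          rw [hdd]; field_simp
        rw [key] at h2
        rw [hA1]
        nlinarith [h2]
    have hle := hanti (Set.left_mem_Icc.mpr (by linarith)) (Set.right_mem_Icc.mpr (by linarith))
      (by linarith)
    have hCaT : a ^ k * (1 - p * k) * T₂ = 1 := by
      rw [hT₂def, mul_one_div, div_self (mul_pos hak (by linarith)).ne']
    have hsplit : a ^ k * (1 - p * k) * (T₂ + T₁)
        = a ^ k * (1 - p * k) * T₂ + a ^ k * (1 - p * k) * T₁ := by ring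
    have h01 : 0 < V (T₂ + T₁) ^ d := Real.rpow_pos_of_pos hVT d
    have hT1le : V T₁ ^ d ≤ 1 :=
      Real.rpow_le_one (hnn T₁ hT₁pos.le) h1 hdpos.le
    simp only at hle
    linarith
  -- Step 3: conclude
  intro t ht
  have h0t : 0 ≤ t := hTpos.le.trans ht
  refine le_antisymm ?_ (hnn t h0t)
  have := hant (Set.mem_Ici.mpr hTpos.le) (Set.mem_Ici.mpr h0t) ht
  linarith
end

section
/- Let V : [0,∞) → ℝ be a nonnegative differentiable function satisfying V'(t) ≤ -a₁·V(t)^{b₁} - a₂·V(t)^{b₂} whenever V(t) > 0, where a₁, a₂ > 0, b₁ > 1, and 0 < b₂ < 1. Then V(t) = 0 for all t ≥ 1/(a₁(b₁-1)) + 1/(a₂(1-b₂)). -/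
/-!
While `V > 0`, the function `V ^ (1 - q) / (1 - q) + k t` is nonincreasing whenever
`V' ≤ -k V ^ q`, since its derivative is `V ^ (-q) V' + k ≤ 0`. With `q = b₁ > 1` this shows that,
whatever `V 0` is, `V` drops below `1` within time `1 / (a₁ (b₁ - 1))`; with `q = b₂ < 1` it shows
that from a value at most `1`, `V` cannot stay positive for time `1 / (a₂ (1 - b₂))`. Since
`V' ≤ 0` wherever `V > 0`, and `V = 0` at a positive time is a minimum of `V ≥ 0`, `V` is
nonincreasing, so once it vanishes it stays zero.
-/

open Set

theorem rpow_one_sub_div_add_mul_le_of_deriv_le {V : ℝ → ℝ} {k q s u : ℝ} (hq : q ≠ 1)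
    (hsu : s ≤ u) (hcont : ContinuousOn V (Icc s u))
    (hdiff : ∀ x ∈ Ioo s u, DifferentiableAt ℝ V x) (hpos : ∀ x ∈ Icc s u, 0 < V x)
    (hderiv : ∀ x ∈ Ioo s u, deriv V x ≤ -k * V x ^ q) :
    V u ^ (1 - q) / (1 - q) + k * u ≤ V s ^ (1 - q) / (1 - q) + k * s := by
  have hq' : 1 - q ≠ 0 := sub_ne_zero.mpr hq.symm
  have hanti : AntitoneOn (fun x ↦ V x ^ (1 - q) / (1 - q) + k * x) (Icc s u) := by
    refine antitoneOn_of_hasDerivWithinAt_nonpos (convex_Icc s u) (f' := fun x ↦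
      deriv V x * V x ^ (-q) + k) ?_ (fun x hx ↦ ?_) (fun x hx ↦ ?_)
    · exact ((hcont.rpow_const fun x hx ↦ .inl (hpos x hx).ne').div_const _).add
        (continuousOn_const.mul continuousOn_id)
    · rw [interior_Icc] at hx ⊢
      have hVx := (hpos x (Ioo_subset_Icc_self hx)).ne'
      refine HasDerivAt.hasDerivWithinAt ?_
      refine ((((hdiff x hx).hasDerivAt.rpow_const (.inl hVx)).div_const (1 - q)).add
        ((hasDerivAt_id x).const_mul k)).congr_deriv ?_
      rw [sub_sub_cancel_left]
      field_simp
    · rw [interior_Icc] at hx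
      have hVx := hpos x (Ioo_subset_Icc_self hx)
      have hcancel : V x ^ q * V x ^ (-q) = 1 := by
        rw [← Real.rpow_add hVx, add_neg_cancel, Real.rpow_zero]
      have := mul_le_mul_of_nonneg_right (hderiv x hx) (Real.rpow_pos_of_pos hVx (-q)).le
      linear_combination this - k * hcancel
  exact hanti (left_mem_Icc.mpr hsu) (right_mem_Icc.mpr hsu) hsu

theorem lt_one_of_deriv_le_neg_rpow_of_one_lt {V : ℝ → ℝ} {k q s : ℝ} (hk : 0 < k) (hq : 1 < q)
    (hcont : ContinuousOn V (Icc s (s + 1 / (k * (q - 1)))))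
    (hdiff : ∀ x ∈ Ioo s (s + 1 / (k * (q - 1))), DifferentiableAt ℝ V x)
    (hpos : ∀ x ∈ Icc s (s + 1 / (k * (q - 1))), 0 < V x)
    (hderiv : ∀ x ∈ Ioo s (s + 1 / (k * (q - 1))), deriv V x ≤ -k * V x ^ q) :
    V (s + 1 / (k * (q - 1))) < 1 := by
  set u := s + 1 / (k * (q - 1)) with hu
  have hq1 : 0 < q - 1 := sub_pos.mpr hq
  have hsu : s ≤ u := le_add_of_nonneg_right (by positivity)
  have hcmp := rpow_one_sub_div_add_mul_le_of_deriv_le hq.ne' hsu hcont hdiff hpos hderiv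
  have hend : V s ^ (1 - q) + 1 ≤ V u ^ (1 - q) := by
    have hku : k * u = k * s + 1 / (q - 1) := by rw [hu]; field_simp
    have hflip (a : ℝ) : a / (1 - q) = -(a / (q - 1)) := by rw [← div_neg, neg_sub]
    rw [hku, hflip, hflip] at hcmp
    rw [← div_le_div_iff_of_pos_right hq1, add_div]
    linarith
  by_contra! hge
  have := Real.rpow_le_one_of_one_le_of_nonpos hge (sub_nonpos.mpr hq.le)
  have := Real.rpow_pos_of_pos (hpos s (left_mem_Icc.mpr hsu)) (1 - q)
  linarith

theorem one_lt_of_deriv_le_neg_rpow_of_lt_one {V : ℝ → ℝ} {k q s : ℝ} (hk : 0 < k) (hq : q < 1)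
    (hcont : ContinuousOn V (Icc s (s + 1 / (k * (1 - q)))))
    (hdiff : ∀ x ∈ Ioo s (s + 1 / (k * (1 - q))), DifferentiableAt ℝ V x)
    (hpos : ∀ x ∈ Icc s (s + 1 / (k * (1 - q))), 0 < V x)
    (hderiv : ∀ x ∈ Ioo s (s + 1 / (k * (1 - q))), deriv V x ≤ -k * V x ^ q) :
    1 < V s := by
  set u := s + 1 / (k * (1 - q)) with hu
  have hq1 : 0 < 1 - q := sub_pos.mpr hq
  have hsu : s ≤ u := le_add_of_nonneg_right (by positivity)
  have hcmp := rpow_one_sub_div_add_mul_le_of_deriv_le hq.ne hsu hcont hdiff hpos hderiv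
  have hstart : V u ^ (1 - q) + 1 ≤ V s ^ (1 - q) := by
    have hku : k * u = k * s + 1 / (1 - q) := by rw [hu]; field_simp
    rw [← div_le_div_iff_of_pos_right hq1, add_div]
    linarith
  by_contra! hle
  have := Real.rpow_le_one (hpos s (left_mem_Icc.mpr hsu)).le hle hq1.le
  have := Real.rpow_pos_of_pos (hpos u (right_mem_Icc.mpr hsu)) (1 - q)
  linarith

theorem antitoneOn_Ici_of_deriv_nonpos_of_pos {V : ℝ → ℝ} {a : ℝ} (hcont : ContinuousOn V (Ici a))
    (hdiff : DifferentiableOn ℝ V (Ioi a)) (hnn : ∀ t, a ≤ t → 0 ≤ V t)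
    (hderiv : ∀ t, a < t → 0 < V t → deriv V t ≤ 0) : AntitoneOn V (Ici a) := by
  refine antitoneOn_of_deriv_nonpos (convex_Ici a) hcont (by rwa [interior_Ici]) fun t ht ↦ ?_
  rw [interior_Ici] at ht
  rcases (hnn t (le_of_lt ht)).lt_or_eq with hpos | hzero
  · exact hderiv t ht hpos
  · have hmin : IsLocalMin V t := by
      filter_upwards [eventually_gt_nhds ht] with x hx
      exact hzero ▸ hnn x hx.le
    exact hmin.deriv_eq_zero.le

theorem prescribed_time_stability_general
    (V : ℝ → ℝ) (hV : Differentiable ℝ V)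
    (hnn : ∀ t, 0 ≤ t → 0 ≤ V t)
    (a₁ a₂ b₁ b₂ : ℝ) (ha₁ : 0 < a₁) (ha₂ : 0 < a₂)
    (hb₁ : 1 < b₁) (hb₂1 : b₂ < 1)
    (hineq : ∀ t, 0 ≤ t → 0 < V t →
      deriv V t ≤ -a₁ * V t ^ b₁ - a₂ * V t ^ b₂) :
    ∀ t, 1 / (a₁ * (b₁ - 1)) + 1 / (a₂ * (1 - b₂)) ≤ t → V t = 0 := by
  intro t ht
  have hderiv₁ (x : ℝ) (hx : 0 ≤ x) (hVx : 0 < V x) : deriv V x ≤ -a₁ * V x ^ b₁ :=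
    (hineq x hx hVx).trans (by nlinarith [Real.rpow_pos_of_pos hVx b₂])
  have hderiv₂ (x : ℝ) (hx : 0 ≤ x) (hVx : 0 < V x) : deriv V x ≤ -a₂ * V x ^ b₂ :=
    (hineq x hx hVx).trans (by nlinarith [Real.rpow_pos_of_pos hVx b₁])
  have hanti : AntitoneOn V (Ici 0) :=
    antitoneOn_Ici_of_deriv_nonpos_of_pos hV.continuous.continuousOn hV.differentiableOn hnn
      fun x hx hVx ↦ (hderiv₁ x hx.le hVx).trans
        (by nlinarith [Real.rpow_pos_of_pos hVx b₁])
  by_contra hne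
  have hpos : ∀ x ∈ Icc 0 t, 0 < V x := fun x hx ↦
    ((hnn t (hx.1.trans hx.2)).lt_of_ne' hne).trans_le (hanti hx.1 (hx.1.trans hx.2) hx.2)
  set T₁ := 1 / (a₁ * (b₁ - 1))
  set T₂ := 1 / (a₂ * (1 - b₂))
  have hT₁ : 0 ≤ T₁ := by have := sub_pos.mpr hb₁; positivity
  have hT₂ : 0 ≤ T₂ := by have := sub_pos.mpr hb₂1; positivity
  have hsub₁ : Icc 0 (0 + T₁) ⊆ Icc 0 t := Icc_subset_Icc le_rfl (by linarith)
  have hsub₂ : Icc T₁ (T₁ + T₂) ⊆ Icc 0 t := Icc_subset_Icc hT₁ ht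
  have hsmall := lt_one_of_deriv_le_neg_rpow_of_one_lt ha₁ hb₁ hV.continuous.continuousOn
    (fun x _ ↦ hV x) (fun x hx ↦ hpos x (hsub₁ hx)) fun x hx ↦
      hderiv₁ x hx.1.le (hpos x (hsub₁ (Ioo_subset_Icc_self hx)))
  have hlarge := one_lt_of_deriv_le_neg_rpow_of_lt_one ha₂ hb₂1 hV.continuous.continuousOn
    (fun x _ ↦ hV x) (fun x hx ↦ hpos x (hsub₂ hx)) fun x hx ↦
      hderiv₂ x (hT₁.trans hx.1.le) (hpos x (hsub₂ (Ioo_subset_Icc_self hx)))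
  rw [zero_add] at hsmall
  linarith

/-- PT CLF differential inequality: `V' ≤ -a₁ V^{b₁} - a₂ V^{b₂}` with `b₁ > 1`,
`0 < b₂ < 1` forces `V = 0` after time `1/(a₁(b₁-1)) + 1/(a₂(1-b₂))`. -/
theorem prescribed_time_stability
    (V : ℝ → ℝ) (hV : Differentiable ℝ V)
    (hnn : ∀ t, 0 ≤ t → 0 ≤ V t)
    (a₁ a₂ b₁ b₂ : ℝ) (ha₁ : 0 < a₁) (ha₂ : 0 < a₂)
    (hb₁ : 1 < b₁) (hb₂0 : 0 < b₂) (hb₂1 : b₂ < 1)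
    (hineq : ∀ t, 0 ≤ t → 0 < V t →
      deriv V t ≤ -a₁ * V t ^ b₁ - a₂ * V t ^ b₂) :
    ∀ t, 1 / (a₁ * (b₁ - 1)) + 1 / (a₂ * (1 - b₂)) ≤ t → V t = 0 :=
  prescribed_time_stability_general V hV hnn a₁ a₂ b₁ b₂ ha₁ ha₂ hb₁ hb₂1 hineq
end

section
/- Let h : [0,∞) → ℝ be differentiable and satisfy h'(t) ≤ -a₁·max(0, h(t))^{γ₁} - a₂·max(0, h(t))^{γ₂} for all t, with a₁, a₂ > 0, γ₁ > 1, 0 < γ₂ < 1. Then (i) h(t) ≤ 0 for all t ≥ T := 1/(a₁(γ₁-1)) + 1/(a₂(1-γ₂)), regardless of h(0); and (ii) if h(t₀) ≤ 0 for some t₀, then h(t) ≤ 0 for all t ≥ t₀. -/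
/-!
The right-hand side is nonpositive, so `h` is antitone on `[0, ∞)`; this is the forward
invariance of `{h ≤ 0}`. While `h > 0`, the substitution `u = h ^ (1 - γ) / (1 - γ)` turns
`h' ≤ -k h ^ γ` into `u' ≤ -k`. For `γ₁ > 1` this pushes `h` below `1` by time
`T₁ = 1 / (a₁ (γ₁ - 1))` whatever `h 0` is, and then for `γ₂ < 1` it brings `h` down to `0`
within a further `T₂ = 1 / (a₂ (1 - γ₂))`.
-/

open Set

theorem HasDerivAt.rpow_one_sub_div {f : ℝ → ℝ} {f' x γ : ℝ} (hf : HasDerivAt f f' x)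
    (hx : 0 < f x) (hγ : γ ≠ 1) :
    HasDerivAt (fun y => f y ^ (1 - γ) / (1 - γ)) (f' * f x ^ (-γ)) x := by
  have hγ' : 1 - γ ≠ 0 := sub_ne_zero.2 hγ.symm
  refine ((hf.rpow_const (p := 1 - γ) (Or.inl hx.ne')).div_const (1 - γ)).congr_deriv ?_
  rw [sub_sub_cancel_left]
  field_simp

theorem rpow_one_sub_div_sub_le_of_deriv_le {f : ℝ → ℝ} {a b k γ : ℝ}
    (hf : Differentiable ℝ f) (hγ : γ ≠ 1) (hab : a ≤ b) (hpos : ∀ x ∈ Icc a b, 0 < f x)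
    (hf' : ∀ x ∈ Ioo a b, deriv f x ≤ -k * f x ^ γ) :
    f b ^ (1 - γ) / (1 - γ) - f a ^ (1 - γ) / (1 - γ) ≤ -k * (b - a) := by
  have hg : ∀ x ∈ Icc a b, HasDerivAt (fun y => f y ^ (1 - γ) / (1 - γ))
      (deriv f x * f x ^ (-γ)) x := fun x hx =>
    (hf x).hasDerivAt.rpow_one_sub_div (hpos x hx) hγ
  refine (convex_Icc a b).image_sub_le_mul_sub_of_deriv_le
    (fun x hx => (hg x hx).continuousAt.continuousWithinAt)
    (fun x hx => (hg x (interior_subset hx)).differentiableAt.differentiableWithinAt)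
    (fun x hx => ?_) a (left_mem_Icc.2 hab) b (right_mem_Icc.2 hab) hab
  rw [interior_Icc] at hx
  have hfx := hpos x (Ioo_subset_Icc_self hx)
  rw [(hg x (Ioo_subset_Icc_self hx)).deriv]
  calc deriv f x * f x ^ (-γ) ≤ -k * f x ^ γ * f x ^ (-γ) :=
        mul_le_mul_of_nonneg_right (hf' x hx) (Real.rpow_nonneg hfx.le _)
    _ = -k := by rw [mul_assoc, ← Real.rpow_add hfx, add_neg_cancel, Real.rpow_zero, mul_one]

theorem lt_one_of_deriv_le_neg_mul_rpow {f : ℝ → ℝ} {a k γ : ℝ} (hf : Differentiable ℝ f)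
    (hk : 0 < k) (hγ : 1 < γ) (hpos : ∀ x ∈ Icc a (a + 1 / (k * (γ - 1))), 0 < f x)
    (hf' : ∀ x ∈ Ioo a (a + 1 / (k * (γ - 1))), deriv f x ≤ -k * f x ^ γ) :
    f (a + 1 / (k * (γ - 1))) < 1 := by
  have hT : 0 ≤ 1 / (k * (γ - 1)) := by have := sub_pos.2 hγ; positivity
  have hmain := rpow_one_sub_div_sub_le_of_deriv_le hf hγ.ne' (le_add_of_nonneg_right hT) hpos hf'
  rw [div_sub_div_same, div_le_iff_of_neg (by linarith),
    show -k * (a + 1 / (k * (γ - 1)) - a) * (1 - γ) = 1 by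
      have := (sub_pos.2 hγ).ne'; field_simp; ring] at hmain
  by_contra! h₁
  linarith [Real.rpow_le_one_of_one_le_of_nonpos h₁ (by linarith : 1 - γ ≤ 0),
    Real.rpow_pos_of_pos (hpos a (left_mem_Icc.2 (le_add_of_nonneg_right hT))) (1 - γ)]

theorem exists_nonpos_of_deriv_le_neg_mul_rpow {f : ℝ → ℝ} {a k γ : ℝ}
    (hf : Differentiable ℝ f) (hk : 0 < k) (hγ : γ < 1) (ha : f a ≤ 1)
    (hf' : ∀ x ∈ Ioo a (a + 1 / (k * (1 - γ))), deriv f x ≤ -k * f x ^ γ) :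
    ∃ x ∈ Icc a (a + 1 / (k * (1 - γ))), f x ≤ 0 := by
  by_contra! hpos
  have hT : 0 ≤ 1 / (k * (1 - γ)) := by have := sub_pos.2 hγ; positivity
  have hmain := rpow_one_sub_div_sub_le_of_deriv_le hf hγ.ne (le_add_of_nonneg_right hT) hpos hf'
  rw [div_sub_div_same, div_le_iff₀ (by linarith),
    show -k * (a + 1 / (k * (1 - γ)) - a) * (1 - γ) = -1 by
      have := (sub_pos.2 hγ).ne'; field_simp; ring] at hmain
  have hstart := hpos a (left_mem_Icc.2 (le_add_of_nonneg_right hT))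
  linarith [Real.rpow_le_one hstart.le ha (by linarith : 0 ≤ 1 - γ),
    Real.rpow_pos_of_pos (hpos _ (right_mem_Icc.2 (le_add_of_nonneg_right hT))) (1 - γ)]

theorem exists_nonpos_of_deriv_le_neg_mul_rpow_sub_mul_rpow {f : ℝ → ℝ} {a₁ a₂ γ₁ γ₂ : ℝ}
    (hf : Differentiable ℝ f) (ha₁ : 0 < a₁) (ha₂ : 0 < a₂) (hγ₁ : 1 < γ₁) (hγ₂ : γ₂ < 1)
    (hf' : ∀ x ∈ Ioo 0 (1 / (a₁ * (γ₁ - 1)) + 1 / (a₂ * (1 - γ₂))), 0 < f x →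
      deriv f x ≤ -a₁ * f x ^ γ₁ - a₂ * f x ^ γ₂) :
    ∃ x ∈ Icc 0 (1 / (a₁ * (γ₁ - 1)) + 1 / (a₂ * (1 - γ₂))), f x ≤ 0 := by
  set T₁ := 1 / (a₁ * (γ₁ - 1))
  set T₂ := 1 / (a₂ * (1 - γ₂))
  have hT₁ : 0 < T₁ := one_div_pos.2 (mul_pos ha₁ (by linarith))
  have hT₂ : 0 < T₂ := one_div_pos.2 (mul_pos ha₂ (by linarith))
  by_contra! hpos
  have hdecay : ∀ x ∈ Ioo 0 (T₁ + T₂),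
      deriv f x ≤ -a₁ * f x ^ γ₁ ∧ deriv f x ≤ -a₂ * f x ^ γ₂ := fun x hx => by
    have hx₀ := hpos x (Ioo_subset_Icc_self hx)
    have := hf' x hx hx₀
    constructor <;> linarith [mul_nonneg ha₁.le (Real.rpow_nonneg hx₀.le γ₁),
      mul_nonneg ha₂.le (Real.rpow_nonneg hx₀.le γ₂)]
  have hT₁_lt_one : f T₁ < 1 := by
    have := lt_one_of_deriv_le_neg_mul_rpow (a := 0) hf ha₁ hγ₁
      (fun x hx => hpos x ⟨hx.1, by linarith [hx.2]⟩)
      (fun x hx => (hdecay x ⟨hx.1, by linarith [hx.2]⟩).1)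
    rwa [zero_add] at this
  obtain ⟨x, hx, hx₀⟩ := exists_nonpos_of_deriv_le_neg_mul_rpow hf ha₂ hγ₂ hT₁_lt_one.le
    (fun x hx => (hdecay x ⟨hT₁.trans hx.1, hx.2⟩).2)
  exact (hpos x ⟨hT₁.le.trans hx.1, hx.2⟩).not_ge hx₀

theorem reach_and_stay_general
    (h : ℝ → ℝ) (hdiff : Differentiable ℝ h)
    (a₁ a₂ γ₁ γ₂ : ℝ) (ha₁ : 0 < a₁) (ha₂ : 0 < a₂)
    (hγ₁ : 1 < γ₁) (hγ₂1 : γ₂ < 1)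
    (hineq : ∀ t, 0 ≤ t →
      deriv h t ≤ -a₁ * max 0 (h t) ^ γ₁ - a₂ * max 0 (h t) ^ γ₂) :
    (∀ t, 1 / (a₁ * (γ₁ - 1)) + 1 / (a₂ * (1 - γ₂)) ≤ t → h t ≤ 0) ∧
    (∀ t₀, 0 ≤ t₀ → h t₀ ≤ 0 → ∀ t, t₀ ≤ t → h t ≤ 0) := by
  have hanti : AntitoneOn h (Ici 0) :=
    antitoneOn_of_deriv_nonpos (convex_Ici 0) hdiff.continuous.continuousOn
      hdiff.differentiableOn fun t ht => (hineq t (interior_subset ht)).trans <| by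
        linarith [mul_nonneg ha₁.le (Real.rpow_nonneg (le_max_left 0 (h t)) γ₁),
          mul_nonneg ha₂.le (Real.rpow_nonneg (le_max_left 0 (h t)) γ₂)]
  have hstay : ∀ t₀, 0 ≤ t₀ → h t₀ ≤ 0 → ∀ t, t₀ ≤ t → h t ≤ 0 :=
    fun t₀ ht₀ h₀ t ht => (hanti ht₀ (ht₀.trans ht) ht).trans h₀
  obtain ⟨t₀, ht₀, h₀⟩ := exists_nonpos_of_deriv_le_neg_mul_rpow_sub_mul_rpow hdiff ha₁ ha₂
    hγ₁ hγ₂1 fun x hx hx₀ => by simpa only [max_eq_right hx₀.le] using hineq x hx.1.le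
  exact ⟨fun t ht => hstay t₀ ht₀.1 h₀ t (ht₀.2.trans ht), hstay⟩

/-- Reach-and-stay: under `h' ≤ -a₁ max(0,h)^{γ₁} - a₂ max(0,h)^{γ₂}`,
(i) `h ≤ 0` after the prescribed time, and (ii) `{h ≤ 0}` is forward invariant. -/
theorem reach_and_stay
    (h : ℝ → ℝ) (hdiff : Differentiable ℝ h)
    (a₁ a₂ γ₁ γ₂ : ℝ) (ha₁ : 0 < a₁) (ha₂ : 0 < a₂)
    (hγ₁ : 1 < γ₁) (hγ₂0 : 0 < γ₂) (hγ₂1 : γ₂ < 1)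
    (hineq : ∀ t, 0 ≤ t →
      deriv h t ≤ -a₁ * max 0 (h t) ^ γ₁ - a₂ * max 0 (h t) ^ γ₂) :
    (∀ t, 1 / (a₁ * (γ₁ - 1)) + 1 / (a₂ * (1 - γ₂)) ≤ t → h t ≤ 0) ∧
    (∀ t₀, 0 ≤ t₀ → h t₀ ≤ 0 → ∀ t, t₀ ≤ t → h t ≤ 0) :=
  reach_and_stay_general h hdiff a₁ a₂ γ₁ γ₂ ha₁ ha₂ hγ₁ hγ₂1 hineq
end

section
/- Let h : [0,∞) → ℝ be differentiable and α : ℝ → ℝ be a continuous increasing function with α(0) = 0. If h'(t) ≤ α(-h(t)) for all t and h(0) ≤ 0, then h(t) ≤ 0 for all t ≥ 0. -/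
open Set

/-- Past the last point `s` of `[a, b]` where `f ≤ 0`, `f` is positive, hence antitone on `[s, b]`,
so `f b ≤ f s ≤ 0`. -/
theorem nonpos_of_deriv_nonpos_where_pos {f : ℝ → ℝ} {a b : ℝ} (hab : a ≤ b)
    (hf : ContinuousOn f (Icc a b)) (hf' : DifferentiableOn ℝ f (Ioo a b))
    (hderiv : ∀ x ∈ Ioo a b, 0 < f x → deriv f x ≤ 0) (ha : f a ≤ 0) : f b ≤ 0 := by
  by_contra! hb
  set T := {x ∈ Icc a b | f x ≤ 0}
  have hT : IsCompact T := isCompact_Icc.of_isClosed_subset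
    (hf.preimage_isClosed_of_isClosed isClosed_Icc isClosed_Iic) inter_subset_left
  have hsT : sSup T ∈ T := hT.sSup_mem ⟨a, ⟨left_mem_Icc.2 hab, ha⟩⟩
  set s := sSup T
  have hsb : s < b := hsT.1.2.lt_of_ne fun hs => (hs ▸ hb).not_ge hsT.2
  have hpos : ∀ x ∈ Ioc s b, 0 < f x := fun x hx => by
    by_contra! hfx
    exact hx.1.not_ge (le_csSup hT.bddAbove ⟨⟨hsT.1.1.trans hx.1.le, hx.2⟩, hfx⟩)
  have hanti : AntitoneOn f (Icc s b) := by
    refine antitoneOn_of_deriv_nonpos (convex_Icc s b)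
      (hf.mono (Icc_subset_Icc_left hsT.1.1)) ?_ fun x hx => ?_
    · rw [interior_Icc]
      exact hf'.mono (Ioo_subset_Ioo_left hsT.1.1)
    · rw [interior_Icc] at hx
      exact hderiv x ⟨hsT.1.1.trans_lt hx.1, hx.2⟩ (hpos x (Ioo_subset_Ioc_self hx))
  exact hb.not_ge ((hanti (left_mem_Icc.2 hsb.le) (right_mem_Icc.2 hsb.le) hsb.le).trans hsT.2)

theorem zcbf_invariance_classK_general
    (h : ℝ → ℝ) (hdiff : Differentiable ℝ h)
    (α : ℝ → ℝ) (hmono : StrictMono α) (hα0 : α 0 = 0)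
    (hineq : ∀ t, 0 ≤ t → deriv h t ≤ α (-h t))
    (h0 : h 0 ≤ 0) :
    ∀ t, 0 ≤ t → h t ≤ 0 := by
  intro t ht
  refine nonpos_of_deriv_nonpos_where_pos ht hdiff.continuous.continuousOn
    hdiff.differentiableOn (fun x hx hpos => ?_) h0
  calc deriv h x ≤ α (-h x) := hineq x hx.1.le
    _ ≤ α 0 := hmono.monotone (by linarith)
    _ = 0 := hα0

/-- ZCBF invariance with a general class-K-like function `α`. -/
theorem zcbf_invariance_classK
    (h : ℝ → ℝ) (hdiff : Differentiable ℝ h)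
    (α : ℝ → ℝ) (hcont : Continuous α) (hmono : StrictMono α) (hα0 : α 0 = 0)
    (hineq : ∀ t, 0 ≤ t → deriv h t ≤ α (-h t))
    (h0 : h 0 ≤ 0) :
    ∀ t, 0 ≤ t → h t ≤ 0 :=
  zcbf_invariance_classK_general h hdiff α hmono hα0 hineq h0
end

section
/- Let V : [0,∞) → ℝ be nonnegative and differentiable with V'(t) ≤ -a₁·V(t)^{γ₁} - a₂·V(t)^{γ₂} whenever V(t) > 0, where a₁, a₂ > 0, γ₁ > 1, 0 < γ₂ < 1. Suppose h : [0,∞) → ℝ satisfies h(t) ≤ V(t) ≤ h(t) + c for some c ≥ 0 and all t. Then h(t) ≤ 0 for all t ≥ 1/(a₁(γ₁-1)) + 1/(a₂(1-γ₂)). -/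
open Set

/-- Sublevel-set invariance for a function with negative derivative where positive. -/
lemma clf_sublevel_invariant (V : ℝ → ℝ) (hV : Differentiable ℝ V)
    (hdneg : ∀ t, 0 ≤ t → 0 < V t → deriv V t < 0)
    {m s t : ℝ} (hm : 0 ≤ m) (hs : 0 ≤ s) (hst : s ≤ t) (hVs : V s ≤ m) :
    V t ≤ m := by
  by_contra hlt
  push_neg at hlt
  set S : Set ℝ := {r ∈ Icc s t | V r ≤ m} with hS
  have hne : S.Nonempty := ⟨s, ⟨le_refl s, hst⟩, hVs⟩
  have hbdd : BddAbove S := BddAbove.mono (fun r hr => hr.1) bddAbove_Icc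
  have hclosed : IsClosed S :=
    (isClosed_Icc.inter (isClosed_le hV.continuous continuous_const))
  have huS : sSup S ∈ S := hclosed.csSup_mem hne hbdd
  set u := sSup S with hu
  have hut : u < t := by
    rcases lt_or_eq_of_le huS.1.2 with h | h
    · exact h
    · exact absurd (h ▸ huS.2) (not_le.mpr hlt)
  have hpos : ∀ x ∈ Ioo u t, 0 < V x := by
    intro x hx
    rcases lt_or_ge m (V x) with h | h
    · linarith
    · exact absurd (le_csSup hbdd ⟨⟨huS.1.1.trans hx.1.le, hx.2.le⟩, h⟩)
        (not_le.mpr hx.1)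
  have hanti : StrictAntiOn V (Icc u t) := by
    apply strictAntiOn_of_deriv_neg (convex_Icc u t) hV.continuous.continuousOn
    intro x hx
    rw [interior_Icc] at hx
    exact hdneg x (le_trans (hs.trans huS.1.1) hx.1.le) (hpos x hx)
  have := hanti (left_mem_Icc.mpr hut.le) (right_mem_Icc.mpr hut.le) hut
  linarith [huS.2]

/-- CLF relaxation: a surrogate Lyapunov function `V` sandwiched as
`h ≤ V ≤ h + c` and satisfying the PT differential inequality forces
`h ≤ 0` within the prescribed time. -/
theorem clf_relaxation
    (V h : ℝ → ℝ) (hV : Differentiable ℝ V)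
    (hnn : ∀ t, 0 ≤ t → 0 ≤ V t)
    (a₁ a₂ γ₁ γ₂ c : ℝ) (ha₁ : 0 < a₁) (ha₂ : 0 < a₂)
    (hγ₁ : 1 < γ₁) (hγ₂0 : 0 < γ₂) (hγ₂1 : γ₂ < 1) (hc : 0 ≤ c)
    (hsandwich : ∀ t, 0 ≤ t → h t ≤ V t ∧ V t ≤ h t + c)
    (hineq : ∀ t, 0 ≤ t → 0 < V t →
      deriv V t ≤ -a₁ * V t ^ γ₁ - a₂ * V t ^ γ₂) :
    ∀ t, 1 / (a₁ * (γ₁ - 1)) + 1 / (a₂ * (1 - γ₂)) ≤ t → h t ≤ 0 := by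
  intro t ht
  set T₁ : ℝ := 1 / (a₁ * (γ₁ - 1)) with hT₁
  set T₂ : ℝ := 1 / (a₂ * (1 - γ₂)) with hT₂
  have hA₁ : 0 < a₁ * (γ₁ - 1) := mul_pos ha₁ (by linarith)
  have hA₂ : 0 < a₂ * (1 - γ₂) := mul_pos ha₂ (by linarith)
  have hT₁pos : 0 < T₁ := by positivity
  have hT₂pos : 0 < T₂ := by positivity
  have hdneg : ∀ s, 0 ≤ s → 0 < V s → deriv V s < 0 := by
    intro s hs hVs
    have := hineq s hs hVs
    have h1 : (0:ℝ) < a₁ * V s ^ γ₁ := mul_pos ha₁ (Real.rpow_pos_of_pos hVs _)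
    have h2 : (0:ℝ) < a₂ * V s ^ γ₂ := mul_pos ha₂ (Real.rpow_pos_of_pos hVs _)
    linarith
  -- Phase 1 : V T₁ ≤ 1
  have hVT₁ : V T₁ ≤ 1 := by
    by_contra hVT₁
    push_neg at hVT₁
    have hgt : ∀ r ∈ Icc (0:ℝ) T₁, 1 < V r := by
      intro r hr
      by_contra hle
      push_neg at hle
      exact absurd (clf_sublevel_invariant V hV hdneg zero_le_one hr.1 hr.2 hle)
        (not_le.mpr hVT₁)
    set g : ℝ → ℝ := fun r => V r ^ (1 - γ₁) with hg
    have hgcont : ContinuousOn g (Icc 0 T₁) := by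
      apply ContinuousOn.rpow_const hV.continuous.continuousOn
      intro r hr
      exact Or.inl (by linarith [hgt r hr])
    have hderiv : ∀ x ∈ interior (Icc (0:ℝ) T₁),
        HasDerivAt g (deriv V x * (1 - γ₁) * V x ^ (1 - γ₁ - 1)) x := by
      intro x hx
      rw [interior_Icc] at hx
      exact (hV x).hasDerivAt.rpow_const
        (Or.inl (by linarith [hgt x ⟨hx.1.le, hx.2.le⟩]))
    have hgdiff : DifferentiableOn ℝ g (interior (Icc (0:ℝ) T₁)) :=
      fun x hx => ((hderiv x hx).differentiableAt).differentiableWithinAt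
    have hbound : ∀ x ∈ interior (Icc (0:ℝ) T₁), a₁ * (γ₁ - 1) ≤ deriv g x := by
      intro x hx
      rw [(hderiv x hx).deriv]
      rw [interior_Icc] at hx
      have hVx : 1 < V x := hgt x ⟨hx.1.le, hx.2.le⟩
      have hVxpos : 0 < V x := by linarith
      have hD := hineq x hx.1.le hVxpos
      have hp : 0 < V x ^ (1 - γ₁ - 1) := Real.rpow_pos_of_pos hVxpos _
      have key : (-a₁ * V x ^ γ₁ - a₂ * V x ^ γ₂) * (1 - γ₁) * V x ^ (1 - γ₁ - 1)
          ≤ deriv V x * (1 - γ₁) * V x ^ (1 - γ₁ - 1) := by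
        have h1 : (1 - γ₁) * V x ^ (1 - γ₁ - 1) < 0 :=
          mul_neg_of_neg_of_pos (by linarith) hp
        nlinarith
      refine le_trans ?_ key
      have e1 : V x ^ γ₁ * V x ^ (1 - γ₁ - 1) = V x ^ (γ₁ + (1 - γ₁ - 1)) :=
        (Real.rpow_add hVxpos _ _).symm
      have e2 : γ₁ + (1 - γ₁ - 1) = 0 := by ring
      have e3 : V x ^ γ₁ * V x ^ (1 - γ₁ - 1) = 1 := by
        rw [e1, e2, Real.rpow_zero]
      have h2 : 0 ≤ a₂ * V x ^ γ₂ * V x ^ (1 - γ₁ - 1) := by positivity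
      nlinarith
    have := (convex_Icc (0:ℝ) T₁).mul_sub_le_image_sub_of_le_deriv hgcont hgdiff
      hbound 0 (left_mem_Icc.mpr hT₁pos.le) T₁ (right_mem_Icc.mpr hT₁pos.le) hT₁pos.le
    have e4 : a₁ * (γ₁ - 1) * (T₁ - 0) = 1 := by
      rw [hT₁, sub_zero]; exact mul_one_div_cancel hA₁.ne'
    rw [e4] at this
    have hg0 : 0 < g 0 := Real.rpow_pos_of_pos (by linarith [hgt 0 (left_mem_Icc.mpr hT₁pos.le)]) _
    have hgT : g T₁ < 1 :=
      Real.rpow_lt_one_of_one_lt_of_neg hVT₁ (by linarith)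
    linarith
  -- Phase 2 : ∃ r ∈ [T₁, T₁+T₂], V r = 0
  have hzero : ∃ r ∈ Icc T₁ (T₁ + T₂), V r ≤ 0 := by
    by_contra hno
    push_neg at hno
    have hpos : ∀ r ∈ Icc T₁ (T₁ + T₂), 0 < V r := hno
    set g : ℝ → ℝ := fun r => V r ^ (1 - γ₂) with hg
    have hgcont : ContinuousOn g (Icc T₁ (T₁ + T₂)) := by
      apply ContinuousOn.rpow_const hV.continuous.continuousOn
      intro r hr
      exact Or.inl (hpos r hr).ne'
    have hsub : Icc T₁ (T₁ + T₂) ⊆ Icc T₁ (T₁ + T₂) := le_refl _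
    have hderiv : ∀ x ∈ interior (Icc T₁ (T₁ + T₂)),
        HasDerivAt g (deriv V x * (1 - γ₂) * V x ^ (1 - γ₂ - 1)) x := by
      intro x hx
      rw [interior_Icc] at hx
      exact (hV x).hasDerivAt.rpow_const (Or.inl (hpos x ⟨hx.1.le, hx.2.le⟩).ne')
    have hgdiff : DifferentiableOn ℝ g (interior (Icc T₁ (T₁ + T₂))) :=
      fun x hx => ((hderiv x hx).differentiableAt).differentiableWithinAt
    have hbound : ∀ x ∈ interior (Icc T₁ (T₁ + T₂)),
        deriv g x ≤ -(a₂ * (1 - γ₂)) := by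
      intro x hx
      rw [(hderiv x hx).deriv]
      rw [interior_Icc] at hx
      have hVxpos : 0 < V x := hpos x ⟨hx.1.le, hx.2.le⟩
      have hD := hineq x (hT₁pos.le.trans hx.1.le) hVxpos
      have hp : 0 < V x ^ (1 - γ₂ - 1) := Real.rpow_pos_of_pos hVxpos _
      have key : deriv V x * (1 - γ₂) * V x ^ (1 - γ₂ - 1)
          ≤ (-a₁ * V x ^ γ₁ - a₂ * V x ^ γ₂) * (1 - γ₂) * V x ^ (1 - γ₂ - 1) := by
        have h1 : 0 < (1 - γ₂) * V x ^ (1 - γ₂ - 1) :=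
          mul_pos (by linarith) hp
        nlinarith
      refine key.trans ?_
      have e3 : V x ^ γ₂ * V x ^ (1 - γ₂ - 1) = 1 := by
        rw [← Real.rpow_add hVxpos]
        norm_num
      have h2 : 0 ≤ a₁ * V x ^ γ₁ * V x ^ (1 - γ₂ - 1) := by positivity
      nlinarith
    have := (convex_Icc T₁ (T₁ + T₂)).image_sub_le_mul_sub_of_deriv_le hgcont hgdiff
      hbound T₁ (left_mem_Icc.mpr (by linarith)) (T₁ + T₂)
      (right_mem_Icc.mpr (by linarith)) (by linarith)
    have e4 : -(a₂ * (1 - γ₂)) * (T₁ + T₂ - T₁) = -1 := by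
      rw [hT₂, add_sub_cancel_left, neg_mul, mul_one_div_cancel hA₂.ne']
    rw [e4] at this
    have hgT : g T₁ ≤ 1 :=
      Real.rpow_le_one (hnn T₁ hT₁pos.le) hVT₁ (by linarith)
    have hgend : 0 < g (T₁ + T₂) :=
      Real.rpow_pos_of_pos (hpos _ (right_mem_Icc.mpr (by linarith))) _
    linarith
  obtain ⟨r, hr, hVr⟩ := hzero
  have hr0 : 0 ≤ r := hT₁pos.le.trans hr.1
  have hVt : V t ≤ 0 :=
    clf_sublevel_invariant V hV hdneg le_rfl hr0 (hr.2.trans ht) hVr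
  linarith [(hsandwich t (hr0.trans (hr.2.trans ht))).1]
end

section
/- Let V : [0,∞) → ℝ be a nonnegative differentiable function with V'(t) ≤ -a·V(t)^γ whenever V(t) > 0, where a > 0 and 0 < γ < 1. Then V(t) = 0 for all t ≥ V(0)^{1-γ}/(a(1-γ)). -/
/-!
Along a solution, `W u = V u ^ (1 - γ) + a (1 - γ) u` has derivative
`(1 - γ) V ^ (-γ) V' + a (1 - γ) ≤ 0` wherever `V > 0`, so `W` is antitone on every interval where
`V` stays positive; `W` is continuous up to the zeros of `V` because `1 - γ > 0`. If `V t > 0`, let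
`s` be the last point of `[0, t]` that is `0` or a zero of `V`. Then `W t ≤ W s ≤ a (1 - γ) t`,
both when `V s = 0` and, since `t ≥ V 0 ^ (1 - γ) / (a (1 - γ))`, when `s = 0`;
hence `V t ^ (1 - γ) ≤ 0`, which is absurd.
-/

open Set

theorem antitoneOn_rpow_add_mul_of_hasDerivAt_le {V V' : ℝ → ℝ} {a γ s t : ℝ} (hγ : γ < 1)
    (hcont : ContinuousOn V (Icc s t)) (hderiv : ∀ u ∈ Ioo s t, HasDerivAt V (V' u) u)
    (hpos : ∀ u ∈ Ioo s t, 0 < V u) (hle : ∀ u ∈ Ioo s t, V' u ≤ -a * V u ^ γ) :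
    AntitoneOn (fun u => V u ^ (1 - γ) + a * (1 - γ) * u) (Icc s t) := by
  have hp : 0 < 1 - γ := sub_pos.2 hγ
  refine antitoneOn_of_hasDerivWithinAt_nonpos (convex_Icc s t)
    ((hcont.rpow_const fun _ _ => Or.inr hp.le).add (continuousOn_const.mul continuousOn_id))
    (f' := fun u => V' u * (1 - γ) * V u ^ (-γ) + a * (1 - γ)) ?_ ?_
  all_goals rw [interior_Icc]
  · intro u hu
    have h := ((hderiv u hu).rpow_const (p := 1 - γ) (Or.inl (hpos u hu).ne')).add
      ((hasDerivAt_id u).const_mul (a * (1 - γ)))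
    rw [sub_sub_cancel_left, mul_one] at h
    exact h.hasDerivWithinAt
  · intro u hu
    have hVγ : V u ^ γ * V u ^ (-γ) = 1 := by
      rw [Real.rpow_neg (hpos u hu).le, mul_inv_cancel₀ (Real.rpow_pos_of_pos (hpos u hu) γ).ne']
    have hcoef : 0 ≤ (1 - γ) * V u ^ (-γ) := mul_nonneg hp.le (Real.rpow_nonneg (hpos u hu).le _)
    linear_combination mul_le_mul_of_nonneg_right (hle u hu) hcoef - a * (1 - γ) * hVγ

theorem exists_mem_Icc_forall_Ioo_notMem {K : Set ℝ} (hK : IsClosed K) {r t : ℝ} (hrt : r ≤ t)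
    (hr : r ∈ K) : ∃ s ∈ Icc r t, s ∈ K ∧ ∀ u ∈ Ioo s t, u ∉ K := by
  have hne : (K ∩ Icc r t).Nonempty := ⟨r, hr, left_mem_Icc.2 hrt⟩
  have hbdd : BddAbove (K ∩ Icc r t) := bddAbove_Icc.mono inter_subset_right
  obtain ⟨hsK, hsIcc⟩ := (hK.inter isClosed_Icc).csSup_mem hne hbdd
  refine ⟨_, hsIcc, hsK, fun u hu huK => ?_⟩
  exact hu.1.not_ge (le_csSup hbdd ⟨huK, hsIcc.1.trans hu.1.le, hu.2.le⟩)

theorem finite_time_stability_general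
    (V : ℝ → ℝ) (hV : Differentiable ℝ V)
    (hnn : ∀ t, 0 ≤ t → 0 ≤ V t)
    (a γ : ℝ) (ha : 0 < a) (hγ1 : γ < 1)
    (hineq : ∀ t, 0 ≤ t → 0 < V t → deriv V t ≤ -a * V t ^ γ) :
    ∀ t, V 0 ^ (1 - γ) / (a * (1 - γ)) ≤ t → V t = 0 := by
  intro t ht
  have hap : 0 < a * (1 - γ) := mul_pos ha (sub_pos.2 hγ1)
  have ht0 : 0 ≤ t := (div_nonneg (Real.rpow_nonneg (hnn 0 le_rfl) _) hap.le).trans ht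
  by_contra hVt0
  obtain ⟨s, ⟨hs0, hst⟩, hs, hgap⟩ := exists_mem_Icc_forall_Ioo_notMem
    (isClosed_singleton.union (isClosed_singleton.preimage hV.continuous)) ht0 (Or.inl rfl)
  have hpos : ∀ u ∈ Ioo s t, 0 < V u := fun u hu =>
    (hnn u (hs0.trans hu.1.le)).lt_of_ne' fun h => hgap u hu (Or.inr h)
  have hW := antitoneOn_rpow_add_mul_of_hasDerivAt_le hγ1 hV.continuous.continuousOn
    (fun u _ => (hV u).hasDerivAt) hpos (fun u hu => hineq u (hs0.trans hu.1.le) (hpos u hu))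
    (left_mem_Icc.2 hst) (right_mem_Icc.2 hst) hst
  have hWs : V s ^ (1 - γ) + a * (1 - γ) * s ≤ a * (1 - γ) * t := by
    rcases hs with rfl | hVs
    · simpa using (div_le_iff₀' hap).1 ht
    · rw [mem_preimage, mem_singleton_iff] at hVs
      rw [hVs, Real.zero_rpow (sub_pos.2 hγ1).ne', zero_add]
      exact mul_le_mul_of_nonneg_left hst hap.le
  have hVt : 0 < V t ^ (1 - γ) := Real.rpow_pos_of_pos ((hnn t ht0).lt_of_ne' hVt0) _
  simp only at hW
  linarith

/-- Finite-time stability comparison lemma (Bhat–Bernstein): `V' ≤ -a V^γ`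
with `0 < γ < 1` forces `V = 0` after time `V(0)^{1-γ}/(a(1-γ))`. -/
theorem finite_time_stability
    (V : ℝ → ℝ) (hV : Differentiable ℝ V)
    (hnn : ∀ t, 0 ≤ t → 0 ≤ V t)
    (a γ : ℝ) (ha : 0 < a) (hγ0 : 0 < γ) (hγ1 : γ < 1)
    (hineq : ∀ t, 0 ≤ t → 0 < V t → deriv V t ≤ -a * V t ^ γ) :
    ∀ t, V 0 ^ (1 - γ) / (a * (1 - γ)) ≤ t → V t = 0 :=
  finite_time_stability_general V hV hnn a γ ha hγ1 hineq
end

section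
/- Let a₁, a₂ > 0, γ₁ > 1, 0 < γ₂ < 1, and let v solve the ODE v' = -a₁·v^{γ₁} - a₂·v^{γ₂} with v(0) = v₀ > 0. The time for v to reach 0 is at most T₁ + T₂ where T₁ = 1/(a₁(γ₁-1)) bounds the time for v to decrease from any value (even +∞) to 1, and T₂ = 1/(a₂(1-γ₂)) bounds the time for v to decrease from 1 to 0. -/
/-- Settling-time decomposition for the comparison ODE
`v' = -a₁ v^{γ₁} - a₂ v^{γ₂}`: the time to reach `0` is at most
`T₁ + T₂` with `T₁ = 1/(a₁(γ₁-1))` and `T₂ = 1/(a₂(1-γ₂))`. -/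
theorem settling_time_decomposition
    (v : ℝ → ℝ) (hv : Differentiable ℝ v)
    (a₁ a₂ γ₁ γ₂ v₀ : ℝ) (ha₁ : 0 < a₁) (ha₂ : 0 < a₂)
    (hγ₁ : 1 < γ₁) (hγ₂0 : 0 < γ₂) (hγ₂1 : γ₂ < 1)
    (h0 : v 0 = v₀) (hv₀ : 0 < v₀)
    (hnn : ∀ t, 0 ≤ t → 0 ≤ v t)
    (hode : ∀ t, 0 ≤ t → 0 < v t →
      deriv v t = -a₁ * v t ^ γ₁ - a₂ * v t ^ γ₂) :
    ∃ ts, 0 ≤ ts ∧ ts ≤ 1 / (a₁ * (γ₁ - 1)) + 1 / (a₂ * (1 - γ₂)) ∧ v ts = 0 := by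
  set T₁ : ℝ := 1 / (a₁ * (γ₁ - 1)) with hT₁def
  set T₂ : ℝ := 1 / (a₂ * (1 - γ₂)) with hT₂def
  have hA₁ : 0 < a₁ * (γ₁ - 1) := mul_pos ha₁ (by linarith)
  have hA₂ : 0 < a₂ * (1 - γ₂) := mul_pos ha₂ (by linarith)
  have hT₁ : 0 < T₁ := by positivity
  have hT₂ : 0 < T₂ := by positivity
  have hT₁mul : a₁ * (γ₁ - 1) * T₁ = 1 := by
    rw [hT₁def]; field_simp; exact div_self (ne_of_gt (by linarith))
  have hT₂mul : a₂ * (1 - γ₂) * T₂ = 1 := by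
    rw [hT₂def]; field_simp; exact div_self (ne_of_gt (by linarith))
  by_cases hzero : ∃ t ∈ Set.Icc (0:ℝ) (T₁ + T₂), v t = 0
  · obtain ⟨t, ht, hvt⟩ := hzero
    exact ⟨t, ht.1, ht.2, hvt⟩
  push_neg at hzero
  exfalso
  have hpos : ∀ t ∈ Set.Icc (0:ℝ) (T₁ + T₂), 0 < v t := fun t ht =>
    lt_of_le_of_ne (hnn t ht.1) (Ne.symm (hzero t ht))
  -- Phase 1: there is t₁ ∈ [0, T₁] with v t₁ ≤ 1
  have phase1 : ∃ t₁ ∈ Set.Icc (0:ℝ) T₁, v t₁ ≤ 1 := by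
    by_contra hc
    push_neg at hc
    have hsub : Set.Icc (0:ℝ) T₁ ⊆ Set.Icc (0:ℝ) (T₁ + T₂) :=
      Set.Icc_subset_Icc le_rfl (by linarith)
    have hgt1 : ∀ t ∈ Set.Icc (0:ℝ) T₁, 1 < v t := hc
    set c : ℝ := 1 - γ₁ with hc_def
    set w : ℝ → ℝ := fun t => v t ^ c with hw_def
    have hwd : ∀ t ∈ Set.Icc (0:ℝ) T₁,
        HasDerivAt w (deriv v t * c * v t ^ (c - 1)) t := by
      intro t ht
      exact (hv t).hasDerivAt.rpow_const
        (Or.inl (ne_of_gt (lt_trans one_pos (hgt1 t ht))))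
    have hcont : ContinuousOn w (Set.Icc 0 T₁) := fun t ht =>
      ((hwd t ht).differentiableAt.continuousAt).continuousWithinAt
    have hdiff : DifferentiableOn ℝ w (interior (Set.Icc 0 T₁)) := by
      intro t ht
      have ht' : t ∈ Set.Icc (0:ℝ) T₁ := interior_subset ht
      exact ((hwd t ht').differentiableAt).differentiableWithinAt
    have hbound : ∀ t ∈ interior (Set.Icc (0:ℝ) T₁),
        a₁ * (γ₁ - 1) ≤ deriv w t := by
      intro t ht
      rw [interior_Icc] at ht
      have ht' : t ∈ Set.Icc (0:ℝ) T₁ := Set.mem_Icc.mpr ⟨le_of_lt ht.1, le_of_lt ht.2⟩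
      have hvpos : 0 < v t := lt_trans one_pos (hgt1 t ht')
      rw [(hwd t ht').deriv, hode t (le_of_lt ht.1) hvpos]
      have hexp : c - 1 = -γ₁ := by rw [hc_def]; ring
      rw [hexp]
      have key : v t ^ γ₁ * v t ^ (-γ₁) = 1 := by
        rw [← Real.rpow_add hvpos]; simp
      have hP : 0 < v t ^ γ₁ := Real.rpow_pos_of_pos hvpos _
      have hQ : 0 < v t ^ γ₂ := Real.rpow_pos_of_pos hvpos _
      have hR : 0 < v t ^ (-γ₁) := Real.rpow_pos_of_pos hvpos _
      have hid : (-a₁ * v t ^ γ₁ - a₂ * v t ^ γ₂) * c * v t ^ (-γ₁)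
          = a₁ * (γ₁ - 1) * (v t ^ γ₁ * v t ^ (-γ₁))
            + a₂ * (γ₁ - 1) * (v t ^ γ₂ * v t ^ (-γ₁)) := by
        rw [hc_def]; ring
      rw [hid, key]
      nlinarith [mul_pos (mul_pos ha₂ (show (0:ℝ) < γ₁ - 1 by linarith)) (mul_pos hQ hR)]
    have := (convex_Icc (0:ℝ) T₁).mul_sub_le_image_sub_of_le_deriv hcont hdiff hbound
      0 (Set.left_mem_Icc.mpr hT₁.le) T₁ (Set.right_mem_Icc.mpr hT₁.le) hT₁.le
    rw [sub_zero, hT₁mul] at this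
    -- 1 ≤ w T₁ - w 0, but w T₁ < 1 and w 0 > 0
    have hw0 : 0 < w 0 :=
      Real.rpow_pos_of_pos (lt_trans one_pos (hgt1 0 (Set.left_mem_Icc.mpr hT₁.le))) _
    have hwT : w T₁ < 1 := by
      have h1 : 1 < v T₁ := hgt1 T₁ (Set.right_mem_Icc.mpr hT₁.le)
      have hcneg : c < 0 := by rw [hc_def]; linarith
      calc w T₁ = v T₁ ^ c := rfl
        _ < 1 ^ c := by
            apply Real.rpow_lt_rpow_of_neg one_pos h1 hcneg
        _ = 1 := Real.one_rpow c
    linarith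
  obtain ⟨t₁, ht₁, hvt₁⟩ := phase1
  -- Phase 2: on [t₁, t₁ + T₂] derive contradiction
  set c : ℝ := 1 - γ₂ with hc_def
  have hcpos : 0 < c := by rw [hc_def]; linarith
  set z : ℝ → ℝ := fun t => v t ^ c with hz_def
  have hsub : Set.Icc t₁ (t₁ + T₂) ⊆ Set.Icc (0:ℝ) (T₁ + T₂) :=
    Set.Icc_subset_Icc ht₁.1 (by linarith [ht₁.2])
  have hzd : ∀ t ∈ Set.Icc t₁ (t₁ + T₂),
      HasDerivAt z (deriv v t * c * v t ^ (c - 1)) t := by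
    intro t ht
    exact (hv t).hasDerivAt.rpow_const (Or.inl (ne_of_gt (hpos t (hsub ht))))
  have hcont : ContinuousOn z (Set.Icc t₁ (t₁ + T₂)) := fun t ht =>
    ((hzd t ht).differentiableAt.continuousAt).continuousWithinAt
  have hdiff : DifferentiableOn ℝ z (interior (Set.Icc t₁ (t₁ + T₂))) := by
    intro t ht
    exact ((hzd t (interior_subset ht)).differentiableAt).differentiableWithinAt
  have hbound : ∀ t ∈ interior (Set.Icc t₁ (t₁ + T₂)),
      deriv z t ≤ -(a₂ * (1 - γ₂)) := by
    intro t ht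
    rw [interior_Icc] at ht
    have ht' : t ∈ Set.Icc t₁ (t₁ + T₂) := Set.mem_Icc.mpr ⟨le_of_lt ht.1, le_of_lt ht.2⟩
    have hvpos : 0 < v t := hpos t (hsub ht')
    have htnn : 0 ≤ t := le_trans ht₁.1 (le_of_lt ht.1)
    rw [(hzd t ht').deriv, hode t htnn hvpos]
    have hexp : c - 1 = -γ₂ := by rw [hc_def]; ring
    rw [hexp]
    have key : v t ^ γ₂ * v t ^ (-γ₂) = 1 := by
      rw [← Real.rpow_add hvpos]; simp
    have hP : 0 < v t ^ γ₁ := Real.rpow_pos_of_pos hvpos _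
    have hQ : 0 < v t ^ γ₂ := Real.rpow_pos_of_pos hvpos _
    have hR : 0 < v t ^ (-γ₂) := Real.rpow_pos_of_pos hvpos _
    have hcv : c = 1 - γ₂ := hc_def
    have hid : (-a₁ * v t ^ γ₁ - a₂ * v t ^ γ₂) * c * v t ^ (-γ₂)
        = -(a₂ * (1 - γ₂)) * (v t ^ γ₂ * v t ^ (-γ₂))
          - a₁ * (1 - γ₂) * (v t ^ γ₁ * v t ^ (-γ₂)) := by
      rw [hc_def]; ring
    rw [hid, key]
    nlinarith [mul_pos (mul_pos ha₁ (show (0:ℝ) < 1 - γ₂ by linarith)) (mul_pos hP hR)]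
  have hmem₁ : t₁ ∈ Set.Icc t₁ (t₁ + T₂) := Set.left_mem_Icc.mpr (by linarith)
  have hmem₂ : t₁ + T₂ ∈ Set.Icc t₁ (t₁ + T₂) := Set.right_mem_Icc.mpr (by linarith)
  have hmvt := (convex_Icc t₁ (t₁ + T₂)).image_sub_le_mul_sub_of_deriv_le hcont hdiff hbound
    t₁ hmem₁ (t₁ + T₂) hmem₂ (by linarith)
  rw [add_sub_cancel_left] at hmvt
  have hzt₁ : z t₁ ≤ 1 := by
    have := Real.rpow_le_one (hnn t₁ ht₁.1) hvt₁ hcpos.le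
    exact this
  have hzend : 0 < z (t₁ + T₂) :=
    Real.rpow_pos_of_pos (hpos _ (hsub hmem₂)) _
  have : -(a₂ * (1 - γ₂)) * T₂ = -1 := by
    rw [neg_mul, hT₂mul]
  linarith [hmvt, this ▸ hmvt]
end

section
/- Let h₀, h₁ : [t₀, t₁] → ℝ be differentiable. Suppose h₀(t₀) ≤ 0, h₀'(t) ≤ -λ·h₀(t) for all t ∈ [t₀, t₁] (some λ ∈ ℝ), and h₁'(t) ≤ -a₁·max(0,h₁(t))^{γ₁} - a₂·max(0,h₁(t))^{γ₂} for all t ∈ [t₀, t₁], where a₁, a₂ > 0, γ₁ > 1, 0 < γ₂ < 1 and t₁ - t₀ ≥ 1/(a₁(γ₁-1)) + 1/(a₂(1-γ₂)). Then h₀(t) ≤ 0 for all t ∈ [t₀, t₁] and h₁(t₁) ≤ 0. -/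
/-- One step of the sequential spatio-temporal specification: the ZCBF condition
keeps `h₀ ≤ 0` on `[t₀, t₁]` while the PT CLF condition drives `h₁` to `≤ 0`
by time `t₁`, provided `t₁ - t₀` exceeds the settling bound. -/
theorem spatio_temporal_step
    (h₀ h₁ : ℝ → ℝ) (hd₀ : Differentiable ℝ h₀) (hd₁ : Differentiable ℝ h₁)
    (t₀ t₁ lam a₁ a₂ γ₁ γ₂ : ℝ)
    (ha₁ : 0 < a₁) (ha₂ : 0 < a₂) (hγ₁ : 1 < γ₁) (hγ₂0 : 0 < γ₂) (hγ₂1 : γ₂ < 1)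
    (hT : 1 / (a₁ * (γ₁ - 1)) + 1 / (a₂ * (1 - γ₂)) ≤ t₁ - t₀)
    (hinit : h₀ t₀ ≤ 0)
    (hzcbf : ∀ t ∈ Set.Icc t₀ t₁, deriv h₀ t ≤ -lam * h₀ t)
    (hclf : ∀ t ∈ Set.Icc t₀ t₁,
      deriv h₁ t ≤ -a₁ * max 0 (h₁ t) ^ γ₁ - a₂ * max 0 (h₁ t) ^ γ₂) :
    (∀ t ∈ Set.Icc t₀ t₁, h₀ t ≤ 0) ∧ h₁ t₁ ≤ 0 := by
  have hA1 : 0 < a₁ * (γ₁ - 1) := mul_pos ha₁ (by linarith)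
  have hA2 : 0 < a₂ * (1 - γ₂) := mul_pos ha₂ (by linarith)
  have hc₁ : 0 < 1 / (a₁ * (γ₁ - 1)) := by positivity
  have hc₂ : 0 < 1 / (a₂ * (1 - γ₂)) := by positivity
  have ht01 : t₀ < t₁ := by linarith
  constructor
  · -- Part A: ZCBF invariance
    intro t ht
    have hgd : ∀ x : ℝ, HasDerivAt (fun s => h₀ s * Real.exp (lam * s))
        (deriv h₀ x * Real.exp (lam * x) + h₀ x * (Real.exp (lam * x) * lam)) x := by
      intro x
      have h1 : HasDerivAt (fun s : ℝ => lam * s) lam x := by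
        simpa using (hasDerivAt_id x).const_mul lam
      exact (hd₀ x).hasDerivAt.mul h1.exp
    have hanti : AntitoneOn (fun s => h₀ s * Real.exp (lam * s)) (Set.Icc t₀ t₁) := by
      apply antitoneOn_of_deriv_nonpos (convex_Icc _ _)
      · exact (hd₀.continuous.mul
          (Real.continuous_exp.comp (continuous_const.mul continuous_id))).continuousOn
      · exact fun x _ => (hgd x).differentiableAt.differentiableWithinAt
      · intro x hx
        rw [interior_Icc] at hx
        have hx' : x ∈ Set.Icc t₀ t₁ := ⟨hx.1.le, hx.2.le⟩
        rw [(hgd x).deriv]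
        have h1 := hzcbf x hx'
        have h2 := Real.exp_pos (lam * x)
        nlinarith
    have h3 := hanti (Set.left_mem_Icc.mpr ht01.le) ht ht.1
    simp only at h3
    have h4 : h₀ t₀ * Real.exp (lam * t₀) ≤ 0 :=
      mul_nonpos_of_nonpos_of_nonneg hinit (Real.exp_pos _).le
    have h6 := Real.exp_pos (lam * t)
    nlinarith
  · -- Part B: fixed-time convergence
    by_contra hpos'
    push_neg at hpos'
    have hrhs : ∀ t : ℝ, -a₁ * max 0 (h₁ t) ^ γ₁ - a₂ * max 0 (h₁ t) ^ γ₂ ≤ 0 := by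
      intro t
      have h1 : (0:ℝ) ≤ max 0 (h₁ t) ^ γ₁ := Real.rpow_nonneg (le_max_left _ _) _
      have h2 : (0:ℝ) ≤ max 0 (h₁ t) ^ γ₂ := Real.rpow_nonneg (le_max_left _ _) _
      nlinarith
    have hanti : AntitoneOn h₁ (Set.Icc t₀ t₁) := by
      apply antitoneOn_of_deriv_nonpos (convex_Icc _ _) hd₁.continuous.continuousOn
        hd₁.differentiableOn
      intro x hx
      exact le_trans (hclf x (interior_subset hx)) (hrhs x)
    have hpos : ∀ t ∈ Set.Icc t₀ t₁, 0 < h₁ t := by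
      intro t ht
      exact lt_of_lt_of_le hpos' (hanti ht (Set.right_mem_Icc.mpr ht01.le) ht.2)
    obtain ⟨tm, htm_def⟩ : ∃ tm, tm = t₀ + 1 / (a₁ * (γ₁ - 1)) := ⟨_, rfl⟩
    have htm : tm ∈ Set.Icc t₀ t₁ := ⟨by linarith, by linarith⟩
    -- Phase 1 : h₁ tm ≤ 1
    have hVmono : MonotoneOn (fun s => h₁ s ^ (1 - γ₁) - a₁ * (γ₁ - 1) * s)
        (Set.Icc t₀ tm) := by
      have hsub : Set.Icc t₀ tm ⊆ Set.Icc t₀ t₁ := Set.Icc_subset_Icc le_rfl htm.2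
      have hD : ∀ x ∈ Set.Ioo t₀ tm, HasDerivAt
          (fun s => h₁ s ^ (1 - γ₁) - a₁ * (γ₁ - 1) * s)
          (deriv h₁ x * (1 - γ₁) * h₁ x ^ (1 - γ₁ - 1) - a₁ * (γ₁ - 1)) x := by
        intro x hx
        have hfx : h₁ x ≠ 0 := (hpos x (hsub ⟨hx.1.le, hx.2.le⟩)).ne'
        have hlin : HasDerivAt (fun s : ℝ => a₁ * (γ₁ - 1) * s) (a₁ * (γ₁ - 1)) x := by
          simpa using (hasDerivAt_id x).const_mul (a₁ * (γ₁ - 1))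
        exact ((hd₁ x).hasDerivAt.rpow_const (Or.inl hfx)).sub hlin
      apply monotoneOn_of_deriv_nonneg (convex_Icc _ _)
      · apply ContinuousOn.sub
        · apply ContinuousOn.rpow_const (hd₁.continuous.continuousOn)
          intro x hx
          exact Or.inl (hpos x (hsub hx)).ne'
        · exact (continuous_const.mul continuous_id).continuousOn
      · intro x hx
        rw [interior_Icc] at hx
        exact (hD x hx).differentiableAt.differentiableWithinAt
      · intro x hx
        rw [interior_Icc] at hx
        rw [(hD x hx).deriv]
        have hx' : x ∈ Set.Icc t₀ t₁ := hsub ⟨hx.1.le, hx.2.le⟩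
        have hf : 0 < h₁ x := hpos x hx'
        have hmax : max 0 (h₁ x) = h₁ x := max_eq_right hf.le
        have hder := hclf x hx'
        rw [hmax] at hder
        have hg2 : (0:ℝ) ≤ a₂ * h₁ x ^ γ₂ :=
          mul_nonneg ha₂.le (Real.rpow_nonneg hf.le _)
        have hder' : deriv h₁ x ≤ -a₁ * h₁ x ^ γ₁ := by linarith
        have hB : 0 < h₁ x ^ (1 - γ₁ - 1) := Real.rpow_pos_of_pos hf _
        have hmul : h₁ x ^ γ₁ * h₁ x ^ (1 - γ₁ - 1) = 1 := by
          rw [← Real.rpow_add hf]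
          norm_num
        have key : deriv h₁ x * h₁ x ^ (1 - γ₁ - 1)
            ≤ -a₁ * (h₁ x ^ γ₁ * h₁ x ^ (1 - γ₁ - 1)) := by
          have := mul_le_mul_of_nonneg_right hder' hB.le
          linarith [this]
        rw [hmul] at key
        nlinarith [key, sub_pos.mpr hγ₁]
    have hV := hVmono (Set.left_mem_Icc.mpr (by linarith))
      (Set.right_mem_Icc.mpr (by linarith)) (by linarith)
    simp only at hV
    have hcancel : a₁ * (γ₁ - 1) * (1 / (a₁ * (γ₁ - 1))) = 1 := by
      field_simp
      exact div_self (sub_pos.mpr hγ₁).ne'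
    have hdiff : a₁ * (γ₁ - 1) * tm - a₁ * (γ₁ - 1) * t₀
        = a₁ * (γ₁ - 1) * (1 / (a₁ * (γ₁ - 1))) := by
      rw [htm_def]; ring
    rw [hcancel] at hdiff
    have ht0pos : (0:ℝ) ≤ h₁ t₀ ^ (1 - γ₁) :=
      Real.rpow_nonneg (hpos t₀ (Set.left_mem_Icc.mpr ht01.le)).le _
    have hVtm : 1 ≤ h₁ tm ^ (1 - γ₁) := by linarith
    have htm1 : h₁ tm ≤ 1 := by
      by_contra hgt
      push_neg at hgt
      have := Real.rpow_lt_one_of_one_lt_of_neg hgt (by linarith : 1 - γ₁ < 0)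
      linarith
    -- Phase 2 : h₁ t₁ ≤ 0
    have htmt1 : tm < t₁ := by linarith
    have hWanti : AntitoneOn (fun s => h₁ s ^ (1 - γ₂) + a₂ * (1 - γ₂) * s)
        (Set.Icc tm t₁) := by
      have hsub : Set.Icc tm t₁ ⊆ Set.Icc t₀ t₁ := Set.Icc_subset_Icc htm.1 le_rfl
      have hD : ∀ x ∈ Set.Ioo tm t₁, HasDerivAt
          (fun s => h₁ s ^ (1 - γ₂) + a₂ * (1 - γ₂) * s)
          (deriv h₁ x * (1 - γ₂) * h₁ x ^ (1 - γ₂ - 1) + a₂ * (1 - γ₂)) x := by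
        intro x hx
        have hfx : h₁ x ≠ 0 := (hpos x (hsub ⟨hx.1.le, hx.2.le⟩)).ne'
        have hlin : HasDerivAt (fun s : ℝ => a₂ * (1 - γ₂) * s) (a₂ * (1 - γ₂)) x := by
          simpa using (hasDerivAt_id x).const_mul (a₂ * (1 - γ₂))
        exact ((hd₁ x).hasDerivAt.rpow_const (Or.inl hfx)).add hlin
      apply antitoneOn_of_deriv_nonpos (convex_Icc _ _)
      · apply ContinuousOn.add
        · apply ContinuousOn.rpow_const (hd₁.continuous.continuousOn)
          intro x hx
          exact Or.inl (hpos x (hsub hx)).ne'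
        · exact (continuous_const.mul continuous_id).continuousOn
      · intro x hx
        rw [interior_Icc] at hx
        exact (hD x hx).differentiableAt.differentiableWithinAt
      · intro x hx
        rw [interior_Icc] at hx
        rw [(hD x hx).deriv]
        have hx' : x ∈ Set.Icc t₀ t₁ := hsub ⟨hx.1.le, hx.2.le⟩
        have hf : 0 < h₁ x := hpos x hx'
        have hmax : max 0 (h₁ x) = h₁ x := max_eq_right hf.le
        have hder := hclf x hx'
        rw [hmax] at hder
        have hg1 : (0:ℝ) ≤ a₁ * h₁ x ^ γ₁ :=
          mul_nonneg ha₁.le (Real.rpow_nonneg hf.le _)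
        have hder' : deriv h₁ x ≤ -a₂ * h₁ x ^ γ₂ := by linarith
        have hB : 0 < h₁ x ^ (1 - γ₂ - 1) := Real.rpow_pos_of_pos hf _
        have hmul : h₁ x ^ γ₂ * h₁ x ^ (1 - γ₂ - 1) = 1 := by
          rw [← Real.rpow_add hf]
          norm_num
        have key : deriv h₁ x * h₁ x ^ (1 - γ₂ - 1)
            ≤ -a₂ * (h₁ x ^ γ₂ * h₁ x ^ (1 - γ₂ - 1)) := by
          have := mul_le_mul_of_nonneg_right hder' hB.le
          linarith [this]
        rw [hmul] at key
        nlinarith [key, sub_pos.mpr hγ₂1]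
    have hW := hWanti (Set.left_mem_Icc.mpr htmt1.le) (Set.right_mem_Icc.mpr htmt1.le) htmt1.le
    simp only at hW
    have hcancel2 : a₂ * (1 - γ₂) * (1 / (a₂ * (1 - γ₂))) = 1 := by
      field_simp
      exact div_self (sub_pos.mpr hγ₂1).ne'
    have hWtm : h₁ tm ^ (1 - γ₂) ≤ 1 :=
      Real.rpow_le_one (hpos tm htm).le htm1 (by linarith)
    have hgap : 1 / (a₂ * (1 - γ₂)) ≤ t₁ - tm := by rw [htm_def]; linarith
    have hstep : 1 ≤ a₂ * (1 - γ₂) * (t₁ - tm) := by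
      calc 1 = a₂ * (1 - γ₂) * (1 / (a₂ * (1 - γ₂))) := hcancel2.symm
        _ ≤ a₂ * (1 - γ₂) * (t₁ - tm) := mul_le_mul_of_nonneg_left hgap hA2.le
    have hfinal : h₁ t₁ ^ (1 - γ₂) ≤ 0 := by nlinarith [hW]
    have := Real.rpow_pos_of_pos hpos' (1 - γ₂)
    linarith
end
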